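/- (Admissibility lifts to the total poset.) Let B be a partial order with greatest element 1_B, let x ∈ B be covered by 1_B, and suppose B is admissible via x: for every b ≤ x with b ≠ x, the set L(b) = {z ∈ B : ¬(z ≤ x) and b ≤ z} has a least element. Fix a poset bundle over B whose fibre E(x) over x has a greatest element ⊤_x, and form the total poset. Then for every element (b, y) of the total poset with b ≤ x and (b, y) ≠ (x, ⊤_x), the set J(b, y) = {(z, u) in the total poset : ¬(z ≤ x) and (b, y) ≤ (z, u)} has a least element; moreover if b ≠ x and z₀ is the least element of L(b), then this least element is (z₀, f_b^{z₀}(y)). -/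
import Mathlib


/-- Admissibility lifts to the total poset of a bundle (Lemma 4 of the paper). -/
theorem stmt_8 {B : Type*} [PartialOrder B] (E : B → Type*) [∀ x, PartialOrder (E x)]
    (f : ∀ x z : B, x ≤ z → E x → E z)
    (hmono : ∀ (x z : B) (h : x ≤ z), Monotone (f x z h))
    (hid : ∀ (x : B) (h : x ≤ x), f x x h = id)
    (hcomp : ∀ (x z w : B) (hxz : x ≤ z) (hzw : z ≤ w),
      (f z w hzw) ∘ (f x z hxz) = f x w (le_trans hxz hzw))
    (oneB : B) (honeB : ∀ b : B, b ≤ oneB)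
    (x : B) (hcov : x ⋖ oneB)
    (hadm : ∀ b : B, b ≤ x → b ≠ x →
      ∃ z₀ : B, (¬ z₀ ≤ x ∧ b ≤ z₀) ∧ ∀ z : B, ¬ z ≤ x → b ≤ z → z₀ ≤ z)
    (tx : E x) (htx : ∀ y : E x, y ≤ tx) :
    ∀ (b : B) (y : E b), b ≤ x → (⟨b, y⟩ : Σ c, E c) ≠ ⟨x, tx⟩ →
      ∃ p : Σ c, E c,
        ((¬ p.1 ≤ x ∧ ∃ hb : b ≤ p.1, f b p.1 hb y ≤ p.2) ∧
          ∀ q : Σ c, E c, ¬ q.1 ≤ x → (∃ hb : b ≤ q.1, f b q.1 hb y ≤ q.2) →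
            ∃ hpq : p.1 ≤ q.1, f p.1 q.1 hpq p.2 ≤ q.2) ∧
        (∀ (_ : b ≠ x) (z₀ : B)
            (hz₀ : (¬ z₀ ≤ x ∧ b ≤ z₀) ∧ ∀ z : B, ¬ z ≤ x → b ≤ z → z₀ ≤ z),
          p = ⟨z₀, f b z₀ hz₀.1.2 y⟩) := by
  intro b y hbx hne
  by_cases hbeq : b = x
  · subst hbeq
    refine ⟨⟨oneB, f b oneB (honeB b) y⟩,
      ⟨⟨fun h => hcov.lt.ne (le_antisymm (honeB b) h), ⟨honeB b, le_refl _⟩⟩, ?_⟩, ?_⟩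
    · rintro ⟨q1, q2⟩ hq1 ⟨hb, hfy⟩
      have hlt : b < q1 := lt_of_le_of_ne hb (fun h => hq1 (h ▸ le_refl b))
      have hq1one : q1 = oneB :=
        ((honeB q1).lt_or_eq).resolve_left (hcov.2 hlt)
      subst hq1one
      refine ⟨le_refl _, ?_⟩
      have h1 : f q1 q1 (le_refl q1) (f b q1 (honeB b) y)
          = f b q1 (le_trans (honeB b) (le_refl q1)) y :=
        congrFun (hcomp b q1 q1 (honeB b) (le_refl q1)) y
      exact h1.le.trans hfy
    · intro hbb; exact absurd rfl hbb
  · obtain ⟨z₀, ⟨hz1, hz2⟩, hz3⟩ := hadm b hbx hbeq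
    refine ⟨⟨z₀, f b z₀ hz2 y⟩, ⟨⟨hz1, ⟨hz2, le_refl _⟩⟩, ?_⟩, ?_⟩
    · rintro ⟨q1, q2⟩ hq1 ⟨hb, hfy⟩
      have h01 : z₀ ≤ q1 := hz3 q1 hq1 hb
      refine ⟨h01, ?_⟩
      have h1 : f z₀ q1 h01 (f b z₀ hz2 y) = f b q1 (le_trans hz2 h01) y :=
        congrFun (hcomp b z₀ q1 hz2 h01) y
      exact h1.le.trans hfy
    · intro _ z₀' hz'
      have heq : z₀ = z₀' := le_antisymm (hz3 z₀' hz'.1.1 hz'.1.2) (hz'.2 z₀ hz1 hz2)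
      subst heq
      rfl
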